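/- A triple (S₁,S₂,S₃) of nonempty sets of two-bit labels is a maximal triple satisfying the universal quantifier with respect to the family of valid bit configurations if and only if it is, up to permutation of the three components, one of the following 22 triples: ({00,10,11},{00},{00}); ({01,10,11},{00},{01}); ({00,10,11},{01},{01}); ({00,01,11},{00},{10}); ({00,01,10},{00},{11}); ({00,01,10},{01},{10}); ({00,01,11},{01},{11}); ({01,10,11},{10},{10}); ({00,10,11},{10},{11}); ({01,10,11},{11},{11}); ({00,10},{00},{00,11}); ({01,11},{00},{01,10}); ({00,10},{01},{01,10}); ({01,11},{00,11},{01}); ({00,10},{01,11},{10}); ({11},{00,10},{00,10}); ({10},{01,10},{01,10}); ({10},{00,11},{00,11}); ({00,11},{01,10},{11}); ({11},{01,11},{01,11}); ({10,11},{00,01},{00,01}); ({10,11},{10,11},{10,11}). -/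

import Mathlib

/-- A two-bit label: the first component is the input bit, the second the output bit. -/
abbrev TwoBit := Bool × Bool

/-- A size-3 (multiset of) two-bit labels is a valid bit configuration if, whenever the
number of input bits equal to 1 is even, the XOR of the output bits equals the OR of the
input bits. (This predicate is symmetric in its three arguments.) -/
def validBit (l₁ l₂ l₃ : TwoBit) : Prop :=
  (l₁.1.toNat + l₂.1.toNat + l₃.1.toNat) % 2 = 0 →
    Bool.xor l₁.2 (Bool.xor l₂.2 l₃.2) = (l₁.1 || l₂.1 || l₃.1)

/-- A triple of sets of two-bit labels satisfies the universal quantifier if every choice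
of one label per component is a valid bit configuration. -/
def bitUQ (S : Fin 3 → Set TwoBit) : Prop :=
  ∀ l₁ ∈ S 0, ∀ l₂ ∈ S 1, ∀ l₃ ∈ S 2, validBit l₁ l₂ l₃

def b00 : TwoBit := (false, false)
def b01 : TwoBit := (false, true)
def b10 : TwoBit := (true, false)
def b11 : TwoBit := (true, true)

/-- The 22 maximal bit triples. -/
def bitTriples : List (Fin 3 → Set TwoBit) :=
  [ ![{b00, b10, b11}, {b00}, {b00}],
    ![{b01, b10, b11}, {b00}, {b01}],
    ![{b00, b10, b11}, {b01}, {b01}],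
    ![{b00, b01, b11}, {b00}, {b10}],
    ![{b00, b01, b10}, {b00}, {b11}],
    ![{b00, b01, b10}, {b01}, {b10}],
    ![{b00, b01, b11}, {b01}, {b11}],
    ![{b01, b10, b11}, {b10}, {b10}],
    ![{b00, b10, b11}, {b10}, {b11}],
    ![{b01, b10, b11}, {b11}, {b11}],
    ![{b00, b10}, {b00}, {b00, b11}],
    ![{b01, b11}, {b00}, {b01, b10}],
    ![{b00, b10}, {b01}, {b01, b10}],
    ![{b01, b11}, {b00, b11}, {b01}],
    ![{b00, b10}, {b01, b11}, {b10}],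
    ![{b11}, {b00, b10}, {b00, b10}],
    ![{b10}, {b01, b10}, {b01, b10}],
    ![{b10}, {b00, b11}, {b00, b11}],
    ![{b00, b11}, {b01, b10}, {b11}],
    ![{b11}, {b01, b11}, {b01, b11}],
    ![{b10, b11}, {b00, b01}, {b00, b01}],
    ![{b10, b11}, {b10, b11}, {b10, b11}] ]

/-!
A triple satisfying the universal quantifier is maximal exactly when each component is closed:
it contains every label that is valid with all choices from the other two components. Indeed,
such a label can always be added, and conversely enlarging the other components only shrinks
the set of admissible labels, so a closed triple cannot grow. This is a fact about boxes inside
an arbitrary set of tuples. Over the four two-bit labels the closed triples with nonempty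
components are found by a kernel computation over all triples of finite sets; for the converse
it suffices to check the 22 listed triples, since validity is symmetric and hence maximality
is invariant under permuting the components.
-/

open Set Function

theorem maximal_iff_not_exists_pi_lt {ι : Type*} {π : ι → Type*} [∀ i, Preorder (π i)]
    {Q : (∀ i, π i) → Prop} {x : ∀ i, π i} :
    Maximal Q x ↔ Q x ∧ ¬∃ y, Q y ∧ x ≤ y ∧ ∃ i, x i < y i := by
  simp only [maximal_iff_forall_gt, Pi.lt_def, not_exists, not_and]
  exact and_congr_right fun _ => ⟨fun h y hy hxy i hi => h ⟨hxy, i, hi⟩ hy,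
    fun h y ⟨hxy, i, hi⟩ hy => h y hy hxy i hi⟩

section MaximalBoxes

variable {ι : Type*} {α : ι → Type*} [DecidableEq ι] {P : Set (∀ i, α i)}
  {S T : ∀ i, Set (α i)}

def compatibleAt (P : Set (∀ i, α i)) (S : ∀ i, Set (α i)) (i : ι) : Set (α i) :=
  {a | univ.pi (update S i {a}) ⊆ P}

theorem mem_univ_pi_update_singleton {x : ∀ i, α i} {i : ι} {a : α i} :
    x ∈ univ.pi (update S i {a}) ↔ x i = a ∧ ∀ j ≠ i, x j ∈ S j := by
  simp only [mem_univ_pi]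
  constructor
  · intro h
    exact ⟨by simpa using h i, fun j hj => by simpa [hj] using h j⟩
  · rintro ⟨rfl, h⟩ j
    by_cases hj : j = i
    · subst hj; simp
    · simpa [hj] using h j hj

theorem univ_pi_subset_iff_subset_compatibleAt (i : ι) :
    univ.pi S ⊆ P ↔ S i ⊆ compatibleAt P S i := by
  refine ⟨fun h a ha x hx => h ?_, fun h x hx => h (hx i trivial) ?_⟩
  · rw [mem_univ_pi_update_singleton] at hx
    intro j _
    by_cases hj : j = i
    · subst hj; exact hx.1 ▸ ha
    · exact hx.2 j hj
  · exact mem_univ_pi_update_singleton.2 ⟨rfl, fun j _ => hx j trivial⟩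

theorem compatibleAt_anti (h : S ≤ T) (i : ι) : compatibleAt P T i ⊆ compatibleAt P S i :=
  fun _ ha => (pi_mono fun j _ => update_le_update_iff.2 ⟨le_rfl, fun k _ => h k⟩ j).trans ha

theorem univ_pi_update_insert_subset {i : ι} {a : α i} (hS : univ.pi S ⊆ P)
    (ha : a ∈ compatibleAt P S i) : univ.pi (update S i (insert a (S i))) ⊆ P := by
  intro x hx
  have hxi := hx i trivial
  rw [update_self] at hxi
  rcases hxi with hxa | hxS
  · refine ha (mem_univ_pi_update_singleton.2 ⟨hxa, fun j hj => ?_⟩)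
    simpa [hj] using hx j trivial
  · exact hS fun j _ => by
      by_cases hj : j = i
      · subst hj; exact hxS
      · simpa [hj] using hx j trivial

theorem maximal_univ_pi_subset_iff [Nonempty ι] :
    Maximal (fun S => univ.pi S ⊆ P) S ↔ ∀ i, S i = compatibleAt P S i := by
  refine ⟨fun h i => ?_, fun h => ⟨?_, fun T hT hST i => ?_⟩⟩
  · refine (univ_pi_subset_iff_subset_compatibleAt i).1 h.prop |>.antisymm fun a ha => ?_
    have hle : S ≤ update S i (insert a (S i)) := le_update_self_iff.2 (subset_insert a (S i))
    have hge := h.2 (univ_pi_update_insert_subset h.prop ha) hle i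
    rw [update_self] at hge
    exact hge (mem_insert a (S i))
  · obtain ⟨i⟩ := ‹Nonempty ι›
    exact (univ_pi_subset_iff_subset_compatibleAt i).2 (h i).le
  · calc T i ⊆ compatibleAt P T i := (univ_pi_subset_iff_subset_compatibleAt i).1 hT
      _ ⊆ compatibleAt P S i := compatibleAt_anti hST i
      _ = S i := (h i).symm

end MaximalBoxes

section Permutations

variable {ι β : Type*}

theorem Maximal.comp_perm [Preorder β] {Q : (ι → β) → Prop} {S : ι → β} (hS : Maximal Q S)
    (σ : Equiv.Perm ι) (hQ : ∀ T, Q (T ∘ σ) ↔ Q T) : Maximal Q (S ∘ σ) := by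
  refine ⟨(hQ S).2 hS.prop, fun T hT hle i => ?_⟩
  have hT' : Q (T ∘ σ.symm) := (hQ _).1 (by simpa [comp_assoc] using hT)
  have hle' : S ≤ T ∘ σ.symm := fun j => by simpa using hle (σ.symm j)
  simpa using hS.2 hT' hle' (σ i)

theorem univ_pi_comp_perm_subset_iff {P : Set (ι → β)} (σ : Equiv.Perm ι)
    (hP : ∀ x, x ∘ σ ∈ P ↔ x ∈ P) {S : ι → Set β} :
    univ.pi (S ∘ σ) ⊆ P ↔ univ.pi S ⊆ P := by
  refine ⟨fun h x hx => (hP x).1 (h fun i _ => hx (σ i) trivial), fun h x hx => ?_⟩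
  have hx' : x ∘ σ.symm ∈ P := h fun i _ => by simpa using hx (σ.symm i) trivial
  simpa [comp_assoc] using (hP _).2 hx'

end Permutations

section Triples

variable {β : Type*} (R : β → β → β → Prop) (S : Fin 3 → Set β)

def tripleSet : Set (Fin 3 → β) := {x | R (x 0) (x 1) (x 2)}

def IsClosedTriple : Prop :=
  S 0 = {a | ∀ b ∈ S 1, ∀ c ∈ S 2, R a b c} ∧ S 1 = {b | ∀ a ∈ S 0, ∀ c ∈ S 2, R a b c} ∧
    S 2 = {c | ∀ a ∈ S 0, ∀ b ∈ S 1, R a b c}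

theorem forall_mem_triple_iff_univ_pi_subset :
    (∀ a ∈ S 0, ∀ b ∈ S 1, ∀ c ∈ S 2, R a b c) ↔ univ.pi S ⊆ tripleSet R :=
  ⟨fun h x hx => h _ (hx 0 trivial) _ (hx 1 trivial) _ (hx 2 trivial),
    fun h a ha b hb c hc => @h ![a, b, c] fun j _ => by fin_cases j <;> assumption⟩

theorem maximal_univ_pi_subset_tripleSet_iff :
    Maximal (fun S => univ.pi S ⊆ tripleSet R) S ↔ IsClosedTriple R S := by
  have h0 : compatibleAt (tripleSet R) S 0 = {a | ∀ b ∈ S 1, ∀ c ∈ S 2, R a b c} := by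
    ext a
    refine ⟨fun h b hb c hc => @h ![a, b, c] ?_, fun h x hx => ?_⟩
    · exact mem_univ_pi_update_singleton.2 ⟨rfl, fun j hj => by fin_cases j <;> simp_all⟩
    · obtain ⟨rfl, hx⟩ := mem_univ_pi_update_singleton.1 hx
      exact h _ (hx 1 (by decide)) _ (hx 2 (by decide))
  have h1 : compatibleAt (tripleSet R) S 1 = {b | ∀ a ∈ S 0, ∀ c ∈ S 2, R a b c} := by
    ext b
    refine ⟨fun h a ha c hc => @h ![a, b, c] ?_, fun h x hx => ?_⟩
    · exact mem_univ_pi_update_singleton.2 ⟨rfl, fun j hj => by fin_cases j <;> simp_all⟩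
    · obtain ⟨rfl, hx⟩ := mem_univ_pi_update_singleton.1 hx
      exact h _ (hx 0 (by decide)) _ (hx 2 (by decide))
  have h2 : compatibleAt (tripleSet R) S 2 = {c | ∀ a ∈ S 0, ∀ b ∈ S 1, R a b c} := by
    ext c
    refine ⟨fun h a ha b hb => @h ![a, b, c] ?_, fun h x hx => ?_⟩
    · exact mem_univ_pi_update_singleton.2 ⟨rfl, fun j hj => by fin_cases j <;> simp_all⟩
    · obtain ⟨rfl, hx⟩ := mem_univ_pi_update_singleton.1 hx
      exact h _ (hx 0 (by decide)) _ (hx 1 (by decide))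
  simp only [maximal_univ_pi_subset_iff, Fin.forall_fin_succ, IsClosedTriple,
    Fin.succ_zero_eq_one, Fin.succ_one_eq_two, h0, h1, h2, IsEmpty.forall_iff, and_true]

end Triples

instance (l₁ l₂ l₃ : TwoBit) : Decidable (validBit l₁ l₂ l₃) := by
  unfold validBit; infer_instance

theorem validBit_comp_perm (σ : Equiv.Perm (Fin 3)) (x : Fin 3 → TwoBit) :
    validBit (x (σ 0)) (x (σ 1)) (x (σ 2)) ↔ validBit (x 0) (x 1) (x 2) := by
  obtain ⟨a, b, c, rfl⟩ : ∃ a b c, x = ![a, b, c] :=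
    ⟨x 0, x 1, x 2, funext fun i => by fin_cases i <;> rfl⟩
  revert σ a b c
  decide +kernel

set_option synthInstance.maxSize 100000 in
theorem isClosedTriple_of_mem_bitTriples : ∀ S ∈ bitTriples, IsClosedTriple validBit S := by
  simp only [bitTriples, List.forall_mem_cons, List.not_mem_nil, IsEmpty.forall_iff,
    forall_const, and_true, IsClosedTriple, Set.ext_iff, Matrix.cons_val_zero,
    Matrix.cons_val_one, Matrix.cons_val_two, Matrix.head_cons, Matrix.tail_cons,
    Set.mem_ofPred_eq, Set.mem_insert_iff, Set.mem_singleton_iff, forall_eq_or_imp, forall_eq]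
  decide

set_option synthInstance.maxSize 100000 in
theorem exists_perm_mem_bitTriples_of_isClosedTriple {S : Fin 3 → Set TwoBit}
    (hS : IsClosedTriple validBit S) (hne : ∀ j, (S j).Nonempty) :
    ∃ ρ : Equiv.Perm (Fin 3), (fun j => S (ρ j)) ∈ bitTriples := by
  obtain ⟨T, rfl⟩ : ∃ T : Fin 3 → Finset TwoBit, S = fun j => ↑(T j) :=
    ⟨fun j => (S j).toFinite.toFinset, by simp⟩
  obtain ⟨T₀, T₁, T₂, rfl⟩ : ∃ T₀ T₁ T₂, T = ![T₀, T₁, T₂] :=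
    ⟨T 0, T 1, T 2, funext fun i => by fin_cases i <;> rfl⟩
  simp only [Finset.coe_nonempty] at hne
  revert T₀ T₁ T₂
  simp only [IsClosedTriple, bitTriples, List.mem_cons, List.not_mem_nil, or_false, funext_iff,
    Fin.forall_fin_succ, Set.ext_iff, Matrix.cons_val_zero, Matrix.cons_val_one,
    Matrix.cons_val_two, Matrix.cons_val_succ, Finset.mem_coe, Set.mem_ofPred_eq,
    Set.mem_insert_iff, Set.mem_singleton_iff, IsEmpty.forall_iff, and_true]
  decide +kernel

theorem maximal_bit_triples_classification (S : Fin 3 → Set TwoBit)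
    (hne : ∀ j, (S j).Nonempty) :
    (bitUQ S ∧
        ¬ ∃ S' : Fin 3 → Set TwoBit,
            bitUQ S' ∧ (∀ j, S j ⊆ S' j) ∧ (∃ j, S j ⊂ S' j)) ↔
      ∃ ρ : Equiv.Perm (Fin 3), (fun j => S (ρ j)) ∈ bitTriples := by
  have hUQ : bitUQ = fun S => univ.pi S ⊆ tripleSet validBit :=
    funext fun S => propext (forall_mem_triple_iff_univ_pi_subset validBit S)
  refine (maximal_iff_not_exists_pi_lt (Q := bitUQ)).symm.trans ?_
  rw [hUQ]
  constructor
  · intro hmax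
    exact exists_perm_mem_bitTriples_of_isClosedTriple
      ((maximal_univ_pi_subset_tripleSet_iff validBit S).1 hmax) hne
  · rintro ⟨ρ, hρ⟩
    have hmax := (maximal_univ_pi_subset_tripleSet_iff validBit _).2
      (isClosedTriple_of_mem_bitTriples _ hρ)
    convert hmax.comp_perm ρ.symm fun T =>
      univ_pi_comp_perm_subset_iff ρ.symm (validBit_comp_perm ρ.symm) using 1
    ext j : 1
    simp
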